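/- Let (I,μ) be a marked ideal of maximal order (D^μ(I) = O_X), let u ∈ D^{μ−1}(I) be a function of multiplicity one on an open set U (a tangent direction), and let σ be the blow-up at a smooth center C ⊆ supp(I,μ), noting supp(I,μ) ∩ U ⊆ V(u). Then the controlled transform u' := y^{−1}σ*(u) satisfies: (1) u' ∈ D^{μ−1}(σ^c(I,μ)); (2) u' has multiplicity one; (3) V(u') is the strict transform of V(u). -/
import Mathlib

open MvPolynomial

/-- The first derivative ideal: generated by `I` and all first partial derivatives of
elements of `I`. -/
noncomputable def derivIdeal {K : Type*} [CommRing K] {n : ℕ}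
    (I : Ideal (MvPolynomial (Fin n) K)) : Ideal (MvPolynomial (Fin n) K) :=
  I ⊔ Ideal.span {g | ∃ f ∈ I, ∃ i : Fin n, g = pderiv i f}

/-- The `k`-th iterated derivative ideal. -/
noncomputable def derivIdealIter {K : Type*} [CommRing K] {n : ℕ} (k : ℕ)
    (I : Ideal (MvPolynomial (Fin n) K)) : Ideal (MvPolynomial (Fin n) K) :=
  derivIdeal^[k] I

/-- The maximal ideal of polynomials vanishing at the point `x`. -/
noncomputable def ptIdeal {K : Type*} [CommRing K] {n : ℕ} (x : Fin n → K) :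
    Ideal (MvPolynomial (Fin n) K) :=
  Ideal.span {g | ∃ j : Fin n, g = X j - C (x j)}

/-- The standard chart of the blow-up of the coordinate subspace
`{u_1 = ... = u_m = 0}`: `u_i ↦ u'_i · y` for `i < m`, `u_m ↦ y`, `u_i ↦ u'_i` for
`i > m`, where `y = X m` is the exceptional coordinate. -/
noncomputable def blowChart (K : Type*) [CommSemiring K] {n : ℕ} (m : Fin n) :
    MvPolynomial (Fin n) K →ₐ[K] MvPolynomial (Fin n) K :=
  aeval (fun i : Fin n => if i < m then X i * X m else X i)

/-- The controlled transform `σ^c(I) = y^{−μ}·σ*(I)` in the chart. -/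
noncomputable def ctrans {K : Type*} [Field K] {n : ℕ} (m : Fin n) (μ : ℕ)
    (I : Ideal (MvPolynomial (Fin n) K)) : Ideal (MvPolynomial (Fin n) K) :=
  Ideal.span {g | ∃ f ∈ I, blowChart K m f = X m ^ μ * g}

/-! ### Auxiliary lemmas -/

section Aux

variable {K : Type*} [Field K] {n : ℕ}

lemma blowChart_X (m i : Fin n) :
    blowChart K m (X i) = if i < m then X i * X m else X i := by
  simp [blowChart]

lemma eval_blowChart (m : Fin n) (x : Fin n → K) (f : MvPolynomial (Fin n) K) :
    eval x (blowChart K m f) = eval (fun i => if i < m then x i * x m else x i) f := by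
  induction f using MvPolynomial.induction_on with
  | C a => simp [blowChart]
  | add p q hp hq => simp [map_add, hp, hq]
  | mul_X p s hp =>
    rw [map_mul, eval_mul, hp, blowChart_X, eval_mul, eval_X, apply_ite (eval x)]
    split <;> simp

lemma eval_eq_zero_of_mem_ptIdeal {x : Fin n → K} {f : MvPolynomial (Fin n) K}
    (hf : f ∈ ptIdeal x) : eval x f = 0 := by
  have h : ptIdeal x ≤ RingHom.ker (eval x) := by
    rw [ptIdeal, Ideal.span_le]
    rintro g ⟨j, rfl⟩
    simp [RingHom.mem_ker]
  simpa [RingHom.mem_ker] using h hf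

lemma mem_sq_deriv {x : Fin n → K} {f : MvPolynomial (Fin n) K} (hf : f ∈ ptIdeal x ^ 2) :
    eval x f = 0 ∧ ∀ j, eval x (pderiv j f) = 0 := by
  rw [pow_two] at hf
  refine Submodule.mul_induction_on hf ?_ ?_
  · intro a ha b hb
    have ha' := eval_eq_zero_of_mem_ptIdeal ha
    have hb' := eval_eq_zero_of_mem_ptIdeal hb
    refine ⟨by simp [ha'], fun j => ?_⟩
    simp [pderiv_mul, ha', hb']
  · rintro a b ⟨ha, ha'⟩ ⟨hb, hb'⟩
    exact ⟨by simp [ha, hb], fun j => by simp [ha' j, hb' j]⟩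

lemma sub_mem_ptIdeal {x : Fin n → K} (j : Fin n) : X j - C (x j) ∈ ptIdeal x :=
  Ideal.subset_span ⟨j, rfl⟩

lemma taylor_aux (x : Fin n → K) (f : MvPolynomial (Fin n) K) :
    f - (C (eval x f) + ∑ j, C (eval x (pderiv j f)) * (X j - C (x j))) ∈ ptIdeal x ^ 2 := by
  induction f using MvPolynomial.induction_on with
  | C a => simp
  | add p q hp hq =>
    have h := add_mem hp hq
    convert h using 1
    simp only [map_add, eval_add, Finset.sum_add_distrib, add_mul]
    ring
  | mul_X p s hp =>
    have hLmem : (∑ j, C (eval x (pderiv j p)) * (X j - C (x j))) ∈ ptIdeal x :=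
      Submodule.sum_mem _ fun j _ => Ideal.mul_mem_left _ _ (sub_mem_ptIdeal j)
    have h1 : ∀ j : Fin n, eval x (pderiv j (p * X s)) =
        eval x (pderiv j p) * x s + eval x p * (if s = j then 1 else 0) := by
      intro j
      rw [pderiv_mul, pderiv_X]
      rw [Pi.single_apply]
      split <;> simp
    have h2 : (∑ j, C (eval x (pderiv j (p * X s))) * (X j - C (x j))) =
        C (x s) * (∑ j, C (eval x (pderiv j p)) * (X j - C (x j)))
          + C (eval x p) * (X s - C (x s)) := by
      rw [Finset.sum_congr rfl fun j _ => by rw [h1 j]]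
      rw [Finset.mul_sum]
      have h3 : ∀ j : Fin n, C (eval x (pderiv j p) * x s + eval x p * (if s = j then 1 else 0))
          * (X j - C (x j)) =
          C (x s) * (C (eval x (pderiv j p)) * (X j - C (x j)))
            + (if s = j then C (eval x p) * (X j - C (x j)) else 0) := by
        intro j
        split <;> simp <;> ring
      rw [Finset.sum_congr rfl fun j _ => h3 j, Finset.sum_add_distrib]
      congr 1
      rw [Finset.sum_ite_eq Finset.univ s (fun j => C (eval x p) * (X j - C (x j)))]
      simp
    have key : p * X s -
        (C (eval x (p * X s)) + ∑ j, C (eval x (pderiv j (p * X s))) * (X j - C (x j)))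
        = (p - (C (eval x p) + ∑ j, C (eval x (pderiv j p)) * (X j - C (x j)))) * X s
          + (∑ j, C (eval x (pderiv j p)) * (X j - C (x j))) * (X s - C (x s)) := by
      rw [h2, eval_mul, eval_X, map_mul]
      ring
    rw [key]
    refine add_mem (Ideal.mul_mem_right _ _ hp) ?_
    rw [pow_two]
    exact Ideal.mul_mem_mul hLmem (sub_mem_ptIdeal s)

lemma mem_sq_of_derivs {x : Fin n → K} {f : MvPolynomial (Fin n) K}
    (h0 : eval x f = 0) (hd : ∀ j, eval x (pderiv j f) = 0) : f ∈ ptIdeal x ^ 2 := by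
  have h := taylor_aux x f
  simpa [h0, hd] using h

/-! ### Chain rules for the blow-up chart -/

lemma pderiv_blowChart_lt (m : Fin n) {j : Fin n} (hj : j < m) (f : MvPolynomial (Fin n) K) :
    pderiv j (blowChart K m f) = X m * blowChart K m (pderiv j f) := by
  induction f using MvPolynomial.induction_on with
  | C a => simp [blowChart]
  | add p q hp hq => simp [map_add, hp, hq, mul_add]
  | mul_X p s hp =>
    have hXs : pderiv j (blowChart K m (X s)) = X m * blowChart K m (pderiv j (X s)) := by
      rw [blowChart_X, pderiv_X, Pi.single_apply]
      rcases eq_or_ne s j with rfl | hne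
      · rw [if_pos (by simp [hj] : s < m)]
        simp [pderiv_mul, pderiv_X_of_ne hj.ne']
      · rw [if_neg hne]
        split
        · simp [pderiv_mul, pderiv_X_of_ne hj.ne', pderiv_X_of_ne hne]
        · simp [pderiv_X_of_ne hne]
    rw [map_mul, pderiv_mul, hp, hXs, pderiv_mul, map_add, map_mul, map_mul]
    ring

lemma pderiv_blowChart_gt (m : Fin n) {j : Fin n} (hj : m < j) (f : MvPolynomial (Fin n) K) :
    pderiv j (blowChart K m f) = blowChart K m (pderiv j f) := by
  induction f using MvPolynomial.induction_on with
  | C a => simp [blowChart]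
  | add p q hp hq => simp [map_add, hp, hq]
  | mul_X p s hp =>
    have hXs : pderiv j (blowChart K m (X s)) = blowChart K m (pderiv j (X s)) := by
      rw [blowChart_X, pderiv_X, Pi.single_apply]
      rcases eq_or_ne s j with rfl | hne
      · rw [if_neg (by simp [hj.le, not_lt.mpr hj.le] : ¬ s < m)]
        simp
      · rw [if_neg hne]
        split
        · simp [pderiv_mul, pderiv_X_of_ne hj.ne, pderiv_X_of_ne hne]
        · simp [pderiv_X_of_ne hne]
    rw [map_mul, pderiv_mul, hp, hXs, pderiv_mul, map_add, map_mul, map_mul]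

lemma pderiv_blowChart_self (m : Fin n) (f : MvPolynomial (Fin n) K) :
    pderiv m (blowChart K m f) =
      (∑ i ∈ Finset.univ.filter (fun i : Fin n => i < m),
        X i * blowChart K m (pderiv i f)) + blowChart K m (pderiv m f) := by
  induction f using MvPolynomial.induction_on with
  | C a => simp [blowChart]
  | add p q hp hq =>
    simp only [map_add, hp, hq, mul_add, Finset.sum_add_distrib]
    ring
  | mul_X p s hp =>
    have hXs : pderiv m (blowChart K m (X s)) =
        (∑ i ∈ Finset.univ.filter (fun i : Fin n => i < m),
          X i * blowChart K m (pderiv i (X s))) + blowChart K m (pderiv m (X s)) := by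
      rw [blowChart_X]
      rcases lt_trichotomy s m with hs | heq | hs
      · rw [if_pos hs, pderiv_mul, pderiv_X_of_ne hs.ne, pderiv_X_self]
        rw [Finset.sum_eq_single s (fun i _ hne => by
            simp [pderiv_X_of_ne (Ne.symm hne)]) (fun hs' => by simp [hs] at hs')]
        simp [hs, pderiv_X_of_ne hs.ne]
      · subst heq
        rw [if_neg (lt_irrefl s), pderiv_X_self]
        rw [Finset.sum_eq_zero (fun i hi => by
          simp only [Finset.mem_filter] at hi
          simp [pderiv_X_of_ne hi.2.ne'])]
        simp
      · rw [if_neg (not_lt.mpr hs.le), pderiv_X_of_ne hs.ne']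
        rw [Finset.sum_eq_zero (fun i hi => by
          simp only [Finset.mem_filter] at hi
          simp [pderiv_X_of_ne (hi.2.trans hs).ne'])]
        simp [pderiv_X_of_ne hs.ne']
    rw [map_mul, pderiv_mul, hp, hXs]
    have e1 : (∑ i ∈ Finset.univ.filter (fun i : Fin n => i < m),
        X i * blowChart K m (pderiv i (p * X s))) =
        (∑ i ∈ Finset.univ.filter (fun i : Fin n => i < m),
          X i * blowChart K m (pderiv i p)) * blowChart K m (X s)
        + blowChart K m p * (∑ i ∈ Finset.univ.filter (fun i : Fin n => i < m),
            X i * blowChart K m (pderiv i (X s))) := by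
      rw [Finset.sum_mul, Finset.mul_sum, ← Finset.sum_add_distrib]
      refine Finset.sum_congr rfl fun i _ => ?_
      rw [pderiv_mul, map_add, map_mul, map_mul]
      ring
    rw [e1, pderiv_mul, map_add, map_mul, map_mul]
    ring

/-! ### Divisibility of the pullback for the center ideal power -/

lemma blowChart_center_pow (m : Fin n) (μ : ℕ) {f : MvPolynomial (Fin n) K}
    (hf : f ∈ Ideal.span {g | ∃ i ≤ m, g = X i} ^ μ) :
    ∃ g, blowChart K m f = X m ^ μ * g := by
  have h1 : Ideal.map (blowChart K m).toRingHom (Ideal.span {g | ∃ i ≤ m, g = X i})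
      ≤ Ideal.span {(X m : MvPolynomial (Fin n) K)} := by
    rw [Ideal.map_span]
    rw [Ideal.span_le]
    rintro g ⟨g', ⟨i, hi, rfl⟩, rfl⟩
    have : (blowChart K m).toRingHom (X i) = if i < m then X i * X m else X i := blowChart_X m i
    rw [this]
    rcases lt_or_eq_of_le hi with h | rfl
    · rw [if_pos h]
      exact Ideal.mul_mem_left _ _ (Ideal.subset_span rfl)
    · rw [if_neg (lt_irrefl i)]
      exact Ideal.subset_span rfl
  have h2 : blowChart K m f ∈ Ideal.span {(X m : MvPolynomial (Fin n) K)} ^ μ := by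
    have h3 := Ideal.mem_map_of_mem (blowChart K m).toRingHom hf
    rw [Ideal.map_pow] at h3
    exact Ideal.pow_right_mono h1 μ h3
  rw [Ideal.span_singleton_pow, Ideal.mem_span_singleton] at h2
  obtain ⟨g, hg⟩ := h2
  exact ⟨g, hg⟩

/-! ### Basic properties of `derivIdeal` -/

lemma le_derivIdeal {K' : Type*} [CommRing K'] (J : Ideal (MvPolynomial (Fin n) K')) :
    J ≤ derivIdeal J := le_sup_left

lemma pderiv_mem_derivIdeal {K' : Type*} [CommRing K'] {J : Ideal (MvPolynomial (Fin n) K')}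
    {f : MvPolynomial (Fin n) K'} (hf : f ∈ J) (i : Fin n) : pderiv i f ∈ derivIdeal J :=
  Submodule.mem_sup_right (Ideal.subset_span ⟨f, hf, i, rfl⟩)

lemma derivIdealIter_succ {K' : Type*} [CommRing K'] (k : ℕ)
    (J : Ideal (MvPolynomial (Fin n) K')) :
    derivIdealIter (k + 1) J = derivIdeal (derivIdealIter k J) := by
  simp [derivIdealIter, Function.iterate_succ_apply']

/-! ### The main inductive lemma (Giraud) -/

lemma giraud_main (m : Fin n) (μ : ℕ) (I : Ideal (MvPolynomial (Fin n) K))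
    (hC : I ≤ Ideal.span {g | ∃ i ≤ m, g = X i} ^ μ) :
    ∀ k, k ≤ μ → ∀ f ∈ derivIdealIter k I,
      ∃ g ∈ derivIdealIter k (ctrans m μ I), blowChart K m f = X m ^ (μ - k) * g := by
  intro k
  induction k with
  | zero =>
    intro _ f hf
    obtain ⟨g, hg⟩ := blowChart_center_pow m μ (hC hf)
    exact ⟨g, Ideal.subset_span ⟨f, hf, hg⟩, hg⟩
  | succ k ih =>
    intro hk f hf
    have hkμ : k ≤ μ := Nat.le_of_succ_le hk
    have hsub : μ - k = (μ - (k + 1)) + 1 := by omega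
    set T := ctrans m μ I with hT
    let A : Ideal (MvPolynomial (Fin n) K) :=
      { carrier := {f | ∃ g ∈ derivIdealIter (k + 1) T,
          blowChart K m f = X m ^ (μ - (k + 1)) * g}
        add_mem' := by
          rintro a b ⟨g1, hg1, e1⟩ ⟨g2, hg2, e2⟩
          exact ⟨g1 + g2, add_mem hg1 hg2, by rw [map_add, e1, e2]; ring⟩
        zero_mem' := ⟨0, zero_mem _, by simp⟩
        smul_mem' := by
          rintro c a ⟨g, hg, e⟩
          exact ⟨blowChart K m c * g, Ideal.mul_mem_left _ _ hg, by
            rw [smul_eq_mul, map_mul, e]; ring⟩ }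
    have hmem : ∀ f', f' ∈ A ↔ ∃ g ∈ derivIdealIter (k + 1) T,
        blowChart K m f' = X m ^ (μ - (k + 1)) * g := fun _ => Iff.rfl
    suffices hA : derivIdealIter (k + 1) I ≤ A by
      exact (hmem f).mp (hA hf)
    rw [derivIdealIter_succ, derivIdeal]
    refine sup_le ?_ ?_
    · intro f' hf'
      obtain ⟨g, hg, e⟩ := ih hkμ f' hf'
      refine ⟨X m * g, ?_, ?_⟩
      · rw [derivIdealIter_succ]
        exact Ideal.mul_mem_left _ _ (le_derivIdeal _ hg)
      · rw [e, hsub, pow_succ]; ring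
    · rw [Ideal.span_le]
      rintro _ ⟨f', hf', j, rfl⟩
      obtain ⟨g, hg, e⟩ := ih hkμ f' hf'
      rw [hsub] at e
      have hgsucc : g ∈ derivIdealIter (k + 1) T := by
        rw [derivIdealIter_succ]; exact le_derivIdeal _ hg
      have hdsucc : ∀ i, pderiv i g ∈ derivIdealIter (k + 1) T := by
        intro i; rw [derivIdealIter_succ]; exact pderiv_mem_derivIdeal hg i
      have hXne : (X m : MvPolynomial (Fin n) K) ≠ 0 := X_ne_zero m
      -- the key computation for j < m
      have hlt : ∀ {j'}, j' < m →
          blowChart K m (pderiv j' f') = X m ^ (μ - (k + 1)) * pderiv j' g := by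
        intro j' hj'
        have h' : X m * blowChart K m (pderiv j' f') =
            X m * (X m ^ (μ - (k + 1)) * pderiv j' g) := by
          rw [← pderiv_blowChart_lt m hj', e, pderiv_mul, pderiv_pow,
            pderiv_X_of_ne hj'.ne']
          ring
        exact mul_left_cancel₀ hXne h'
      rcases lt_trichotomy j m with hj | heq | hj
      · exact ⟨pderiv j g, hdsucc j, hlt hj⟩
      · -- j = m
        rw [heq]
        have hCeq := pderiv_blowChart_self (K := K) m f'
        have hBm : blowChart K m (pderiv m f') =
            pderiv m (blowChart K m f') -
              ∑ i ∈ Finset.univ.filter (fun i : Fin n => i < m),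
                X i * blowChart K m (pderiv i f') := by
          rw [hCeq]; ring
        have hsum : ∑ i ∈ Finset.univ.filter (fun i : Fin n => i < m),
            X i * blowChart K m (pderiv i f') =
            X m ^ (μ - (k + 1)) * ∑ i ∈ Finset.univ.filter (fun i : Fin n => i < m),
              X i * pderiv i g := by
          rw [Finset.mul_sum]
          refine Finset.sum_congr rfl fun i hi => ?_
          rw [hlt (Finset.mem_filter.mp hi).2]
          ring
        refine ⟨(((μ - (k + 1) + 1 : ℕ) : MvPolynomial (Fin n) K)) * g + X m * pderiv m g
            - ∑ i ∈ Finset.univ.filter (fun i : Fin n => i < m), X i * pderiv i g,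
          sub_mem (add_mem (Ideal.mul_mem_left _ _ hgsucc) (Ideal.mul_mem_left _ _ (hdsucc m)))
            (Submodule.sum_mem _ fun i _ => Ideal.mul_mem_left _ _ (hdsucc i)), ?_⟩
        rw [hBm, hsum, e, pderiv_mul, pderiv_pow, pderiv_X_self]
        simp only [Nat.add_sub_cancel]
        push_cast
        ring
      · refine ⟨X m * pderiv j g, Ideal.mul_mem_left _ _ (hdsucc j), ?_⟩
        rw [← pderiv_blowChart_gt m hj, e, pderiv_mul, pderiv_pow, pderiv_X_of_ne hj.ne]
        ring

/-! ### Multiplicity-one transfer -/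

lemma strict_mult (m : Fin n) {u u' : MvPolynomial (Fin n) K}
    (hBu : blowChart K m u = X m * u') (x : Fin n → K)
    (h0 : eval x u' = 0)
    (hne : ∀ j, j ≠ m → eval x (pderiv j u') = 0)
    (hm : x m * eval x (pderiv m u') = 0) :
    eval (fun i => if i < m then x i * x m else x i) u = 0 ∧
      ∀ j, eval (fun i => if i < m then x i * x m else x i) (pderiv j u) = 0 := by
  have heval : ∀ f : MvPolynomial (Fin n) K,
      eval (fun i => if i < m then x i * x m else x i) f = eval x (blowChart K m f) :=
    fun f => (eval_blowChart m x f).symm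
  have hlt : ∀ i : Fin n, i < m → blowChart K m (pderiv i u) = pderiv i u' := by
    intro i hi
    have h1 : X m * blowChart K m (pderiv i u) = X m * pderiv i u' := by
      rw [← pderiv_blowChart_lt m hi, hBu, pderiv_mul, pderiv_X_of_ne hi.ne']
      ring
    exact mul_left_cancel₀ (X_ne_zero m) h1
  constructor
  · rw [heval, hBu]
    simp [h0]
  · intro j
    rw [heval]
    rcases lt_trichotomy j m with hj | heq | hj
    · rw [hlt j hj]
      exact hne j hj.ne
    · rw [heq]
      have h1 := pderiv_blowChart_self (K := K) m u
      have h2 : blowChart K m (pderiv m u) = pderiv m (blowChart K m u) -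
          ∑ i ∈ Finset.univ.filter (fun i : Fin n => i < m),
            X i * blowChart K m (pderiv i u) := by
        rw [h1]; ring
      rw [h2, hBu, pderiv_mul, pderiv_X_self, one_mul]
      rw [map_sub, map_add, eval_mul, eval_X, map_sum]
      rw [Finset.sum_eq_zero (fun i hi => by
        rw [eval_mul, hlt i (Finset.mem_filter.mp hi).2,
          hne i (Finset.mem_filter.mp hi).2.ne, mul_zero])]
      rw [h0, hm, add_zero, sub_zero]
    · have h1 : blowChart K m (pderiv j u) = X m * pderiv j u' := by
        rw [← pderiv_blowChart_gt m hj, hBu, pderiv_mul, pderiv_X_of_ne hj.ne]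
        ring
      rw [h1, eval_mul, eval_X, hne j hj.ne', mul_zero]

end Aux

/-- Giraud's lemma: if `(I,μ)` is of maximal order, `u ∈ D^{μ−1}(I)` is a tangent
direction (multiplicity one on its zero set) vanishing on the smooth center
`C = {u_1 = ... = u_m = 0} ⊆ supp(I,μ)`, then the controlled transform
`u' = y^{−1}σ*(u)` satisfies: (1) `u' ∈ D^{μ−1}(σ^c(I,μ))`; (2) `u'` has multiplicity
one; (3) `V(u')` is the strict transform of `V(u)` (i.e. `y ∤ u'`). -/
theorem stmt_17 {K : Type*} [Field K] [CharZero K] {n : ℕ} (m : Fin n) (μ : ℕ)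
    (hμ : 1 ≤ μ) (I : Ideal (MvPolynomial (Fin n) K)) (u : MvPolynomial (Fin n) K)
    (hu0 : u ≠ 0)
    (hmax : derivIdealIter μ I = ⊤)
    (hu : u ∈ derivIdealIter (μ - 1) I)
    (hord : ∀ x : Fin n → K, eval x u = 0 → u ∉ ptIdeal x ^ 2)
    (hC : I ≤ Ideal.span {g | ∃ i ≤ m, g = X i} ^ μ)
    (huC : u ∈ Ideal.span {g | ∃ i ≤ m, g = X i}) :
    ∃ u' : MvPolynomial (Fin n) K,
      blowChart K m u = X m * u' ∧
      u' ∈ derivIdealIter (μ - 1) (ctrans m μ I) ∧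
      (∀ x : Fin n → K, eval x u' = 0 → u' ∉ ptIdeal x ^ 2) ∧
      ¬ X m ∣ u' := by
  obtain ⟨u', hu'T, hBu⟩ := giraud_main m μ I hC (μ - 1) (Nat.sub_le _ _) u hu
  rw [show μ - (μ - 1) = 1 from by omega, pow_one] at hBu
  refine ⟨u', hBu, hu'T, ?_, ?_⟩
  · intro x hx hsq
    obtain ⟨-, hd⟩ := mem_sq_deriv hsq
    obtain ⟨h0, hj⟩ := strict_mult m hBu x hx (fun j _ => hd j) (by rw [hd m, mul_zero])
    exact hord _ h0 (mem_sq_of_derivs h0 hj)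
  · rintro ⟨v, hv⟩
    have h0' : eval (0 : Fin n → K) u' = 0 := by rw [hv]; simp
    have hb : ∀ j, j ≠ m → eval (0 : Fin n → K) (pderiv j u') = 0 := by
      intro j hjm
      rw [hv, pderiv_mul, pderiv_X_of_ne (Ne.symm hjm)]
      simp
    obtain ⟨h0, hj⟩ := strict_mult m hBu 0 h0' hb (by simp)
    have hq0 : (fun i : Fin n => if i < m then (0 : Fin n → K) i * (0 : Fin n → K) m
        else (0 : Fin n → K) i) = (0 : Fin n → K) := by
      funext i; simp
    rw [hq0] at h0 hj
    exact hord 0 h0 (mem_sq_of_derivs h0 hj)
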